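/- (Formal Birkhoff Normal Form, existence) Let ω ∈ ℝ^ℤ be non-resonant and let H = D_ω + Z + R be a formal Hamiltonian with Z ∈ 𝓚 ∩ 𝓕^{≥2} and R ∈ 𝓕^{≥d} for some d ≥ 1. Then there exists S ∈ 𝓕^{≥d} such that e^{{S,·}} H = D_ω + Z̃ with Z̃ ∈ 𝓚 and Z̃ − Z ∈ 𝓚 ∩ 𝓕^{≥d}. -/

import Mathlib

open scoped BigOperators ENNReal

/-- The index set `ℕ^ℤ_f`: finitely supported functions `ℤ → ℕ`. -/
abbrev Idx : Type := ℤ →₀ ℕ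

/-- Coefficient families of formal Hamiltonians. -/
abbrev Coeffs : Type := Idx → Idx → ℂ

/-- `|α| = ∑_j α_j`. -/
def wt (α : Idx) : ℕ := α.sum fun _ n => n

/-- The momentum `π(α,β) = ∑_j j (α_j - β_j)`. -/
def mom (α β : Idx) : ℤ := (α.sum fun j n => j * (n : ℤ)) - (β.sum fun j n => j * (n : ℤ))

/-- Membership in the space `𝓕` of formal Hamiltonians: vanishing of the
constant and linear coefficients, reality and momentum conservation. -/
def InF (H : Coeffs) : Prop :=
  H 0 0 = 0 ∧ H (Finsupp.single 0 1) 0 = 0 ∧ H 0 (Finsupp.single 0 1) = 0 ∧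
    (∀ α β, H α β = (starRingEnd ℂ) (H β α)) ∧ (∀ α β, mom α β ≠ 0 → H α β = 0)

/-- Membership in `𝓕^{≥d}`: supported on pairs with `|α|+|β| ≥ d+2`. -/
def InFge (d : ℕ) (H : Coeffs) : Prop :=
  InF H ∧ ∀ α β, wt α + wt β < d + 2 → H α β = 0

/-- Membership in `𝓚`: supported on the diagonal `{α = β}`. -/
def InK (H : Coeffs) : Prop := InF H ∧ ∀ α β, α ≠ β → H α β = 0

/-- Membership in `𝓡`: supported off the diagonal. -/
def InR (H : Coeffs) : Prop := InF H ∧ ∀ α, H α α = 0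

/-- A single term of the Poisson-bracket double sum `{F,G}_{α,β}`, indexed by
`x = (j, ((α¹,β¹), (α²,β²)))`: it is
`F_{α¹,β¹} G_{α²,β²} (α¹_j β²_j − β¹_j α²_j)` when `π(α¹,β¹) = π(α²,β²) = 0`,
`α = α¹+α²−e_j` and `β = β¹+β²−e_j`, and `0` otherwise. -/
noncomputable def bracketTerm (F G : Coeffs) (α β : Idx)
    (x : ℤ × (Idx × Idx) × (Idx × Idx)) : ℂ :=
  if mom x.2.1.1 x.2.1.2 = 0 ∧ mom x.2.2.1 x.2.2.2 = 0 ∧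
      α = x.2.1.1 + x.2.2.1 - Finsupp.single x.1 1 ∧
      β = x.2.1.2 + x.2.2.2 - Finsupp.single x.1 1 then
    F x.2.1.1 x.2.1.2 * G x.2.2.1 x.2.2.2 *
      ((x.2.1.1 x.1 : ℂ) * (x.2.2.2 x.1 : ℂ) - (x.2.1.2 x.1 : ℂ) * (x.2.2.1 x.1 : ℂ))
  else 0

/-- The Poisson bracket `{F,G}`, defined coefficientwise by
`{F,G}_{α,β} = i ∑_x bracketTerm F G α β x` (a sum with finitely many
nonzero terms, so the `finsum` gives the intended value). -/
noncomputable def bracket (F G : Coeffs) : Coeffs := fun α β =>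
  Complex.I * ∑ᶠ x : ℤ × (Idx × Idx) × (Idx × Idx), bracketTerm F G α β x

/-- Iterates `ad_G^k`. -/
noncomputable def adPow (G : Coeffs) : ℕ → Coeffs → Coeffs
  | 0, H => H
  | k + 1, H => bracket G (adPow G k H)

/-- The formal symplectic change of variables `e^{{G,·}} = ∑_{k≥0} ad_G^k / k!`;
for `G ∈ 𝓕^{≥1}` each coefficient receives only finitely many nonzero
contributions, so the `finsum` gives the intended value. -/
noncomputable def expAd (G H : Coeffs) : Coeffs := fun α β =>
  ∑ᶠ k : ℕ, ((k.factorial : ℂ))⁻¹ * adPow G k H α β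

/-- The quadratic Hamiltonian `D_ω = ∑_j ω_j |u_j|²`, whose only nonzero
coefficients are `(D_ω)_{e_j,e_j} = ω_j`. -/
noncomputable def Dom (ω : ℤ → ℝ) : Coeffs := fun α β =>
  ∑ᶠ j : ℤ, if α = Finsupp.single j 1 ∧ β = Finsupp.single j 1 then (ω j : ℂ) else 0

/-- Non-resonance: every non-trivial finite integer combination of `ω` is nonzero. -/
def NonResonant (ω : ℤ → ℝ) : Prop :=
  ∀ ℓ : ℤ →₀ ℤ, ℓ ≠ 0 → (ℓ.sum fun j c => ω j * (c : ℝ)) ≠ 0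


/-!
The generator `S` is built degree by degree. A coefficient of `e^{{S,·}} H` of degree `N`
depends on `S` only through its part of degree `< N` and, at degree exactly `N`, only through
the first-order term `{S, D_ω}_{α,β} = i λ_{α,β} S_{α,β}`, where
`λ_{α,β} = ∑_j ω_j (α_j - β_j)` is the small divisor. Non-resonance gives `λ_{α,β} ≠ 0` off
the diagonal, so `S_{α,β}` can be chosen to cancel that coefficient. Momentum conservation is
what makes the bracket sums finite, and hence the bracket additive.
-/

lemma wt_eq_degree (α : Idx) : wt α = α.degree := rfl

@[simp] lemma wt_zero : wt 0 = 0 := rfl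

@[simp] lemma wt_add (α β : Idx) : wt (α + β) = wt α + wt β := by simp [wt_eq_degree]

@[simp] lemma wt_single (j : ℤ) (n : ℕ) : wt (Finsupp.single j n) = n := by simp [wt_eq_degree]

lemma mom_add_add (a b c e : Idx) : mom (a + b) (c + e) = mom a c + mom b e := by
  simp only [mom]
  rw [Finsupp.sum_add_index' (by simp) (by intros; push_cast; ring),
    Finsupp.sum_add_index' (by simp) (by intros; push_cast; ring)]
  ring

@[simp] lemma mom_self (a : Idx) : mom a a = 0 := sub_self _

lemma mom_comm (a b : Idx) : mom b a = -mom a b := (neg_sub _ _).symm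

lemma mom_add_single_left (a b : Idx) (j : ℤ) : mom (a + Finsupp.single j 1) b = mom a b + j := by
  simpa [mom] using mom_add_add a (Finsupp.single j 1) b 0

lemma mom_add_single_right (a b : Idx) (j : ℤ) : mom a (b + Finsupp.single j 1) = mom a b - j := by
  simpa [mom, sub_eq_add_neg] using mom_add_add a 0 b (Finsupp.single j 1)

lemma le_of_add_eq_add_single {b d β : Idx} {j : ℤ} (h : b + d = β + Finsupp.single j 1)
    (hb : b j = 0) : b ≤ β := by
  intro i
  have hi := DFunLike.congr_fun h i
  simp only [Finsupp.coe_add, Pi.add_apply, Finsupp.single_apply] at hi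
  split_ifs at hi with hji
  · subst hji; omega
  · omega

def VanishesBelow (m : ℕ) (F : Coeffs) : Prop := ∀ α β, wt α + wt β < m → F α β = 0

def EqBelow (m : ℕ) (F G : Coeffs) : Prop := ∀ α β, wt α + wt β < m → F α β = G α β

def IsReal (F : Coeffs) : Prop := ∀ α β, F α β = starRingEnd ℂ (F β α)

def ConservesMomentum (F : Coeffs) : Prop := ∀ α β, mom α β ≠ 0 → F α β = 0

lemma VanishesBelow.mono {m n : ℕ} {F : Coeffs} (hF : VanishesBelow n F) (h : m ≤ n) :
    VanishesBelow m F :=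
  fun α β hαβ => hF α β (by omega)

lemma IsReal.add {F G : Coeffs} (hF : IsReal F) (hG : IsReal G) : IsReal (F + G) :=
  fun α β => by simp [hF α β, hG α β]

lemma IsReal.sub {F G : Coeffs} (hF : IsReal F) (hG : IsReal G) : IsReal (F - G) :=
  fun α β => by simp [hF α β, hG α β]

lemma ConservesMomentum.add {F G : Coeffs} (hF : ConservesMomentum F)
    (hG : ConservesMomentum G) : ConservesMomentum (F + G) :=
  fun α β h => by simp [hF α β h, hG α β h]

lemma ConservesMomentum.sub {F G : Coeffs} (hF : ConservesMomentum F)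
    (hG : ConservesMomentum G) : ConservesMomentum (F - G) :=
  fun α β h => by simp [hF α β h, hG α β h]

lemma InF.isReal {F : Coeffs} (hF : InF F) : IsReal F := hF.2.2.2.1

lemma InF.conservesMomentum {F : Coeffs} (hF : InF F) : ConservesMomentum F := hF.2.2.2.2

lemma inF_of_vanishesBelow {F : Coeffs} (h2 : VanishesBelow 2 F) (hr : IsReal F)
    (hm : ConservesMomentum F) : InF F :=
  ⟨h2 _ _ (by simp), h2 _ _ (by simp), h2 _ _ (by simp), hr, hm⟩

lemma InF.sub {F G : Coeffs} (hF : InF F) (hG : InF G) : InF (F - G) :=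
  ⟨by simp [hF.1, hG.1], by simp [hF.2.1, hG.2.1], by simp [hF.2.2.1, hG.2.2.1],
    hF.isReal.sub hG.isReal, hF.conservesMomentum.sub hG.conservesMomentum⟩

lemma InK.sub {F G : Coeffs} (hF : InK F) (hG : InK G) : InK (F - G) :=
  ⟨hF.1.sub hG.1, fun α β h => by simp [hF.2 α β h, hG.2 α β h]⟩

lemma conj_finsum {ι : Type*} (f : ι → ℂ) :
    starRingEnd ℂ (∑ᶠ i, f i) = ∑ᶠ i, starRingEnd ℂ (f i) :=
  AddEquivClass.map_finsum (starRingAut : ℂ ≃+* ℂ) f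

section Dom

variable (ω : ℤ → ℝ)

lemma dom_apply_single (j : ℤ) :
    Dom ω (Finsupp.single j 1) (Finsupp.single j 1) = ω j := by
  rw [Dom, finsum_eq_single _ j fun i hij => if_neg ?_, if_pos ⟨rfl, rfl⟩]
  rintro ⟨h, -⟩
  exact hij (Finsupp.single_left_injective one_ne_zero h).symm

lemma exists_eq_single_of_dom_ne_zero {α β : Idx} (h : Dom ω α β ≠ 0) :
    ∃ j, α = Finsupp.single j 1 ∧ β = Finsupp.single j 1 := by
  by_contra! hαβ
  exact h (finsum_eq_zero_of_forall_eq_zero fun j => if_neg fun hj => hαβ j hj.1 hj.2)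

lemma dom_vanishesBelow : VanishesBelow 2 (Dom ω) := by
  intro α β hαβ
  by_contra h
  obtain ⟨j, rfl, rfl⟩ := exists_eq_single_of_dom_ne_zero ω h
  simp at hαβ

lemma dom_apply_of_ne {α β : Idx} (h : α ≠ β) : Dom ω α β = 0 := by
  by_contra hD
  obtain ⟨j, rfl, rfl⟩ := exists_eq_single_of_dom_ne_zero ω hD
  exact h rfl

lemma dom_conservesMomentum : ConservesMomentum (Dom ω) := by
  intro α β hαβ
  by_contra h
  obtain ⟨j, rfl, rfl⟩ := exists_eq_single_of_dom_ne_zero ω h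
  exact hαβ (mom_self _)

lemma dom_isReal : IsReal (Dom ω) := by
  intro α β
  rcases eq_or_ne α β with rfl | hne
  · simp only [Dom, conj_finsum, apply_ite, Complex.conj_ofReal, map_zero]
  · rw [dom_apply_of_ne ω hne, dom_apply_of_ne ω hne.symm, map_zero]

end Dom

noncomputable def smallDivisor (ω : ℤ → ℝ) (α β : Idx) : ℝ :=
  ∑ j ∈ α.support ∪ β.support, ω j * ((α j : ℝ) - β j)

lemma smallDivisor_comm (ω : ℤ → ℝ) (α β : Idx) : smallDivisor ω β α = -smallDivisor ω α β := by
  rw [smallDivisor, smallDivisor, Finset.union_comm, ← Finset.sum_neg_distrib]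
  exact Finset.sum_congr rfl fun _ _ => by ring

lemma smallDivisor_ne_zero {ω : ℤ → ℝ} (hω : NonResonant ω) {α β : Idx} (h : α ≠ β) :
    smallDivisor ω α β ≠ 0 := by
  let ℓ : ℤ →₀ ℤ := α.mapRange (↑) Nat.cast_zero - β.mapRange (↑) Nat.cast_zero
  have hℓ : ℓ ≠ 0 := fun h0 => h <| Finsupp.ext fun j => by
    simpa [ℓ, sub_eq_zero] using DFunLike.congr_fun h0 j
  have hsupp : ℓ.support ⊆ α.support ∪ β.support := fun j hj => by
    contrapose! hj
    simp_all [ℓ]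
  convert hω ℓ hℓ using 1
  rw [Finsupp.sum_of_support_subset ℓ hsupp _ (by simp), smallDivisor]
  exact Finset.sum_congr rfl fun j _ => by simp [ℓ]

lemma wt_add_wt_eq {α β A B C D : Idx} {j : ℤ} (hAC : A + C = α + Finsupp.single j 1)
    (hBD : B + D = β + Finsupp.single j 1) : (wt A + wt B) + (wt C + wt D) = wt α + wt β + 2 := by
  have hAC' := congrArg wt hAC
  have hBD' := congrArg wt hBD
  simp only [wt_add, wt_single] at hAC' hBD'
  omega

section Bracket

variable {F G : Coeffs} {α β : Idx}

lemma bracketTerm_mk (F G : Coeffs) (α β A B C D : Idx) (j : ℤ) :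
    bracketTerm F G α β (j, (A, B), (C, D)) =
      if mom A B = 0 ∧ mom C D = 0 ∧ A + C = α + Finsupp.single j 1 ∧
          B + D = β + Finsupp.single j 1 then
        F A B * G C D * ((A j : ℂ) * (D j : ℂ) - (B j : ℂ) * (C j : ℂ))
      else 0 := by
  by_cases hc : (A j : ℂ) * (D j : ℂ) - (B j : ℂ) * (C j : ℂ) = 0
  · simp [bracketTerm, hc]
  -- a nonzero factor forces `e_j ≤ A + C` and `e_j ≤ B + D`: the truncated subtractions are exact
  have hc' : A j * D j ≠ B j * C j := fun h =>
    hc (by rw [← Nat.cast_mul, ← Nat.cast_mul, h, sub_self])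
  have hpos : 1 ≤ A j + C j ∧ 1 ≤ B j + D j := by
    refine ⟨Nat.one_le_iff_ne_zero.2 fun h0 => hc' ?_, Nat.one_le_iff_ne_zero.2 fun h0 => hc' ?_⟩ <;>
      simp [Nat.add_eq_zero_iff.1 h0]
  have hAC : Finsupp.single j 1 ≤ A + C := Finsupp.single_le_iff.2 (by simpa using hpos.1)
  have hBD : Finsupp.single j 1 ≤ B + D := Finsupp.single_le_iff.2 (by simpa using hpos.2)
  simp only [bracketTerm, eq_tsub_iff_add_eq_of_le hAC, eq_tsub_iff_add_eq_of_le hBD, eq_comm]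

lemma bracketTerm_ne_zero {A B C D : Idx} {j : ℤ}
    (h : bracketTerm F G α β (j, (A, B), (C, D)) ≠ 0) :
    mom A B = 0 ∧ mom C D = 0 ∧ A + C = α + Finsupp.single j 1 ∧
      B + D = β + Finsupp.single j 1 ∧ F A B ≠ 0 ∧ G C D ≠ 0 ∧ A j * D j ≠ B j * C j := by
  rw [bracketTerm_mk] at h
  split_ifs at h with hc
  · refine ⟨hc.1, hc.2.1, hc.2.2.1, hc.2.2.2, fun h0 => h (by simp [h0]),
      fun h0 => h (by simp [h0]), fun h0 => h ?_⟩
    rw [← Nat.cast_mul, ← Nat.cast_mul, h0, sub_self, mul_zero]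
  · exact absurd rfl h

lemma bracket_eq_zero (h : ∀ x, bracketTerm F G α β x = 0) : bracket F G α β = 0 := by
  rw [bracket, finsum_eq_zero_of_forall_eq_zero h, mul_zero]

lemma bracket_conservesMomentum (F G : Coeffs) : ConservesMomentum (bracket F G) := by
  refine fun α β hαβ => bracket_eq_zero fun ⟨j, (A, B), (C, D)⟩ => ?_
  by_contra h
  obtain ⟨hAB, hCD, hAC, hBD, -⟩ := bracketTerm_ne_zero h
  have := mom_add_add A C B D
  rw [hAC, hBD, mom_add_add, hAB, hCD, mom_self] at this
  exact hαβ (by simpa using this)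

lemma bracket_vanishesBelow {p q m : ℕ} (hF : VanishesBelow p F) (hG : VanishesBelow q G)
    (hm : m + 2 ≤ p + q) : VanishesBelow m (bracket F G) := by
  refine fun α β hαβ => bracket_eq_zero fun ⟨j, (A, B), (C, D)⟩ => ?_
  by_contra h
  obtain ⟨-, -, hAC, hBD, hFAB, hGCD, -⟩ := bracketTerm_ne_zero h
  have hw := wt_add_wt_eq hAC hBD
  rcases Nat.lt_or_ge (wt A + wt B) p with hp | hp
  · exact hFAB (hF A B hp)
  · exact hGCD (hG C D (by omega))

lemma bracket_eqBelow {F' G' : Coeffs} {p q r m : ℕ} (hF : VanishesBelow p F)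
    (hF' : VanishesBelow p F') (hG : VanishesBelow q G) (hG' : VanishesBelow q G')
    (hFF' : EqBelow (p + r) F F') (hGG' : EqBelow (q + r) G G') (hm : m + 2 ≤ p + q + r) :
    EqBelow m (bracket F G) (bracket F' G') := by
  intro α β hαβ
  refine congrArg _ (finsum_congr fun ⟨j, (A, B), (C, D)⟩ => ?_)
  rw [bracketTerm_mk, bracketTerm_mk]
  split_ifs with hc
  swap; · rfl
  have hw := wt_add_wt_eq hc.2.2.1 hc.2.2.2
  rcases Nat.lt_or_ge (wt A + wt B) p with hp | hp
  · simp [hF A B hp, hF' A B hp]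
  rcases Nat.lt_or_ge (wt C + wt D) q with hq | hq
  · simp [hG C D hq, hG' C D hq]
  rw [hFF' A B (by omega), hGG' C D (by omega)]

lemma index_cases_of_bracketTerm_ne_zero {A B C D : Idx} {j : ℤ}
    (h : bracketTerm F G α β (j, (A, B), (C, D)) ≠ 0) :
    α j ≠ 0 ∨ β j ≠ 0 ∨ ∃ a ≤ α, ∃ b ≤ β, j = mom a b ∨ j = -mom a b := by
  obtain ⟨hAB, -, hAC, hBD, -, -, hc⟩ := bracketTerm_ne_zero h
  by_contra! hj
  obtain ⟨hαj, hβj, hmom⟩ := hj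
  have hACj := DFunLike.congr_fun hAC j
  have hBDj := DFunLike.congr_fun hBD j
  simp only [Finsupp.coe_add, Pi.add_apply, hαj, hβj, Finsupp.single_eq_same, zero_add]
    at hACj hBDj
  have hne : A j ≠ B j := fun hAB' => hc (by rw [hAB', show D j = C j by omega, mul_comm])
  have hA : A - Finsupp.single j 1 ≤ α := tsub_le_iff_right.2 (hAC ▸ le_self_add)
  have hB : B - Finsupp.single j 1 ≤ β := tsub_le_iff_right.2 (hBD ▸ le_self_add)
  rcases (by omega : A j = 1 ∧ B j = 0 ∨ A j = 0 ∧ B j = 1) with ⟨hA1, hB0⟩ | ⟨hA0, hB1⟩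
  · have hsplit : A = A - Finsupp.single j 1 + Finsupp.single j 1 :=
      (tsub_add_cancel_of_le (Finsupp.single_le_iff.2 hA1.ge)).symm
    rw [hsplit, mom_add_single_left] at hAB
    exact (hmom _ hA B (le_of_add_eq_add_single hBD hB0)).2 (by omega)
  · have hsplit : B = B - Finsupp.single j 1 + Finsupp.single j 1 :=
      (tsub_add_cancel_of_le (Finsupp.single_le_iff.2 hB1.ge)).symm
    rw [hsplit, mom_add_single_right] at hAB
    exact (hmom A (le_of_add_eq_add_single hAC hA0) _ hB).1 (by omega)

lemma bracketTerm_support_finite (F G : Coeffs) (α β : Idx) :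
    (Function.support (bracketTerm F G α β)).Finite := by
  classical
  let P := Finset.Iic α ×ˢ Finset.Iic β
  let J := α.support ∪ β.support ∪ P.image (fun p => mom p.1 p.2) ∪ P.image (fun p => -mom p.1 p.2)
  let Q : ℤ → Finset (Idx × Idx) := fun j =>
    Finset.Iic (α + Finsupp.single j 1) ×ˢ Finset.Iic (β + Finsupp.single j 1)
  refine (J.biUnion fun j => (Q j ×ˢ Q j).image (Prod.mk j)).finite_toSet.subset ?_
  rintro ⟨j, ⟨A, B⟩, ⟨C, D⟩⟩ h
  obtain ⟨-, -, hAC, hBD, -⟩ := bracketTerm_ne_zero h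
  have hj : j ∈ J := by
    rcases index_cases_of_bracketTerm_ne_zero h with h | h | ⟨a, ha, b, hb, h | h⟩ <;>
      simp [J, P] <;> grind
  simp only [Finset.coe_biUnion, Finset.coe_image, Set.mem_iUnion, Set.mem_image, Prod.mk.injEq]
  refine ⟨j, hj, ((A, B), (C, D)), ?_, rfl, rfl⟩
  simp only [Finset.coe_product, Set.mem_prod, Finset.mem_coe, Finset.mem_Iic, Q, ← hAC, ← hBD]
  exact ⟨⟨le_self_add, le_self_add⟩, le_add_self, le_add_self⟩

lemma bracket_add_left (F F' G : Coeffs) (α β : Idx) :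
    bracket (F + F') G α β = bracket F G α β + bracket F' G α β := by
  rw [bracket, bracket, bracket, ← mul_add, ← finsum_add_distrib
    (bracketTerm_support_finite F G α β) (bracketTerm_support_finite F' G α β)]
  refine congrArg _ (finsum_congr fun ⟨j, (A, B), (C, D)⟩ => ?_)
  simp only [bracketTerm_mk, Pi.add_apply]
  split_ifs <;> ring

lemma bracket_isReal (hF : IsReal F) (hG : IsReal G) : IsReal (bracket F G) := by
  intro α β
  let swap : ℤ × (Idx × Idx) × (Idx × Idx) ≃ ℤ × (Idx × Idx) × (Idx × Idx) :=
    (Equiv.refl ℤ).prodCongr ((Equiv.prodComm Idx Idx).prodCongr (Equiv.prodComm Idx Idx))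
  have hswap : ∀ x, starRingEnd ℂ (bracketTerm F G β α (swap x)) = -bracketTerm F G α β x := by
    rintro ⟨j, ⟨A, B⟩, ⟨C, D⟩⟩
    simp only [swap, Equiv.prodCongr_apply, Equiv.coe_refl, Prod.map_apply, id,
      Equiv.prodComm_apply, Prod.swap_prod_mk, bracketTerm_mk, mom_comm A B, mom_comm C D,
      neg_eq_zero]
    split_ifs with h₁ h₂ h₂
    · simp only [map_mul, map_sub, map_natCast, ← hF A B, ← hG C D]; ring
    · exact absurd ⟨h₁.1, h₁.2.1, h₁.2.2.2, h₁.2.2.1⟩ h₂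
    · exact absurd ⟨h₂.1, h₂.2.1, h₂.2.2.2, h₂.2.2.1⟩ h₁
    · simp
  rw [bracket, bracket, map_mul, Complex.conj_I, conj_finsum,
    ← finsum_comp_equiv swap (f := fun x => starRingEnd ℂ (bracketTerm F G β α x)),
    finsum_congr hswap, finsum_neg_distrib]
  ring

lemma bracket_dom_apply (ω : ℤ → ℝ) (F : Coeffs) (hαβ : mom α β = 0) :
    bracket F (Dom ω) α β = Complex.I * smallDivisor ω α β * F α β := by
  classical
  let φ : ℤ → ℤ × (Idx × Idx) × (Idx × Idx) := fun m =>
    (m, (α, β), (Finsupp.single m 1, Finsupp.single m 1))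
  have hsupp : Function.support (bracketTerm F (Dom ω) α β) ⊆
      ((α.support ∪ β.support).image φ : Finset _) := by
    rintro ⟨j, ⟨A, B⟩, ⟨C, D⟩⟩ h
    obtain ⟨-, -, hAC, hBD, -, hG, hc⟩ := bracketTerm_ne_zero h
    obtain ⟨m, rfl, rfl⟩ := exists_eq_single_of_dom_ne_zero ω hG
    obtain rfl : j = m := by
      by_contra hjm
      exact hc (by simp [Ne.symm hjm])
    obtain ⟨rfl, rfl⟩ : α = A ∧ β = B := ⟨add_right_cancel hAC.symm, add_right_cancel hBD.symm⟩
    have : α j ≠ 0 ∨ β j ≠ 0 := by by_contra! h0; simp [h0] at hc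
    simpa [φ] using this
  have hφ : ∀ m, bracketTerm F (Dom ω) α β (φ m) = F α β * ω m * ((α m : ℂ) - β m) := fun m => by
    rw [bracketTerm_mk, if_pos ⟨hαβ, mom_self _, rfl, rfl⟩, dom_apply_single]
    simp
  rw [bracket, finsum_eq_sum_of_support_subset _ hsupp, Finset.sum_image fun _ _ _ _ h => by
    simpa [φ] using congrArg Prod.fst h, smallDivisor]
  simp only [hφ, Complex.ofReal_sum, Complex.ofReal_mul, Complex.ofReal_sub,
    Complex.ofReal_natCast, Finset.mul_sum, Finset.sum_mul]
  exact Finset.sum_congr rfl fun _ _ => by ring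

end Bracket

section AdPow

variable {d q : ℕ} {U X : Coeffs}

lemma adPow_vanishesBelow (hU : VanishesBelow (d + 2) U) (hX : VanishesBelow q X) (k : ℕ) :
    VanishesBelow (q + k * d) (adPow U k X) := by
  induction k with
  | zero => simpa [adPow] using hX
  | succ k ih => exact bracket_vanishesBelow hU ih (by rw [Nat.succ_mul]; omega)

lemma adPow_conservesMomentum (hX : ConservesMomentum X) :
    ∀ k, ConservesMomentum (adPow U k X)
  | 0 => hX
  | _ + 1 => bracket_conservesMomentum _ _

lemma adPow_isReal (hU : IsReal U) (hX : IsReal X) : ∀ k, IsReal (adPow U k X)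
  | 0 => hX
  | k + 1 => bracket_isReal hU (adPow_isReal hU hX k)

lemma adPow_eqBelow {U' : Coeffs} {r : ℕ} (hU : VanishesBelow (d + 2) U)
    (hU' : VanishesBelow (d + 2) U') (hUU' : EqBelow (d + 2 + r) U U')
    (hX : VanishesBelow q X) (k : ℕ) :
    EqBelow (q + k * d + r) (adPow U k X) (adPow U' k X) := by
  induction k with
  | zero => exact fun _ _ _ => rfl
  | succ k ih =>
    exact bracket_eqBelow hU hU' (adPow_vanishesBelow hU hX k) (adPow_vanishesBelow hU' hX k)
      hUU' ih (by rw [Nat.succ_mul]; omega)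

lemma expAd_eq_sum (hd : 1 ≤ d) (hU : VanishesBelow (d + 2) U) (hX : VanishesBelow q X)
    {α β : Idx} {M : ℕ} (hM : wt α + wt β < q + M) :
    expAd U X α β = ∑ k ∈ Finset.range M, (k.factorial : ℂ)⁻¹ * adPow U k X α β := by
  refine finsum_eq_sum_of_support_subset _ fun k hk => ?_
  by_contra hkM
  have : M ≤ k * d := (Nat.le_of_not_lt (by simpa using hkM)).trans (Nat.le_mul_of_pos_right k hd)
  exact hk (by simp [adPow_vanishesBelow hU hX k α β (by omega)])

lemma expAd_eqBelow_self (hU : VanishesBelow (d + 2) U) (hX : VanishesBelow q X) :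
    EqBelow (d + q) (expAd U X) X := by
  intro α β hαβ
  rw [expAd, finsum_eq_single _ 0 fun k hk => ?_]
  · simp [adPow]
  · have : d ≤ k * d := Nat.le_mul_of_pos_left d (Nat.pos_of_ne_zero hk)
    simp [adPow_vanishesBelow hU hX k α β (by omega)]

lemma expAd_conservesMomentum (hX : ConservesMomentum X) : ConservesMomentum (expAd U X) :=
  fun α β h => finsum_eq_zero_of_forall_eq_zero fun k => by
    rw [adPow_conservesMomentum hX k α β h, mul_zero]

lemma expAd_isReal (hU : IsReal U) (hX : IsReal X) : IsReal (expAd U X) := by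
  intro α β
  simp only [expAd, conj_finsum, map_mul, map_inv₀, map_natCast, ← adPow_isReal hU hX _ α β]

end AdPow

section FirstOrder

variable {ω : ℤ → ℝ} {m : ℕ} {H S U : Coeffs} {α β : Idx}

lemma vanishesBelow_two_of_eqBelow_dom (hHD : EqBelow 3 H (Dom ω)) : VanishesBelow 2 H :=
  fun α β h => (hHD α β (by omega)).trans (dom_vanishesBelow ω α β h)

lemma bracket_apply_eq_add_of_eqBelow (hSU : EqBelow m S U) (hHD : EqBelow 3 H (Dom ω))
    (hαβ : wt α + wt β = m) (hmom : mom α β = 0) (hUαβ : U α β = 0) :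
    bracket S H α β = bracket U H α β + Complex.I * smallDivisor ω α β * S α β := by
  have hW : VanishesBelow m (S - U) := fun a b h => sub_eq_zero.2 (hSU a b h)
  have hWH : bracket (S - U) H α β = bracket (S - U) (Dom ω) α β :=
    bracket_eqBelow hW hW (vanishesBelow_two_of_eqBelow_dom hHD) (dom_vanishesBelow ω)
      (r := 1) (fun _ _ _ => rfl) hHD le_rfl α β (by omega)
  rw [← add_sub_cancel U S, bracket_add_left, hWH, bracket_dom_apply ω _ hmom]
  simp [hUαβ]

lemma expAd_apply_eq_add_of_eqBelow {d r : ℕ} (hd : 1 ≤ d) (hS : VanishesBelow (d + 2) S)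
    (hU : VanishesBelow (d + 2) U) (hSU : EqBelow (d + 2 + r) S U) (hHD : EqBelow 3 H (Dom ω))
    (hαβ : wt α + wt β = d + 2 + r) (hmom : mom α β = 0) (hUαβ : U α β = 0) :
    expAd S H α β = expAd U H α β + Complex.I * smallDivisor ω α β * S α β := by
  have hH := vanishesBelow_two_of_eqBelow_dom hHD
  have hterm : ∀ k, (k.factorial : ℂ)⁻¹ * adPow S k H α β = (k.factorial : ℂ)⁻¹ * adPow U k H α β +
      if k = 1 then Complex.I * smallDivisor ω α β * S α β else 0
    | 0 => by simp [adPow]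
    | 1 => by simpa [adPow] using bracket_apply_eq_add_of_eqBelow hSU hHD hαβ hmom hUαβ
    | k + 2 => by
      have : d ≤ (k + 1) * d := Nat.le_mul_of_pos_left d k.succ_pos
      rw [adPow_eqBelow hS hU hSU hH (k + 2) α β (by rw [Nat.succ_mul]; omega)]
      simp
  rw [expAd_eq_sum hd hS hH (M := d + 2 + r) (by omega),
    expAd_eq_sum hd hU hH (M := d + 2 + r) (by omega),
    Finset.sum_congr rfl fun k _ => hterm k, Finset.sum_add_distrib, Finset.sum_ite_eq',
    if_pos (Finset.mem_range.2 (by omega))]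

end FirstOrder

section Normalizer

variable (ω : ℤ → ℝ) (d : ℕ) (H : Coeffs)

/-- The generator truncated to degrees `< N`. -/
noncomputable def normalizerBelow : ℕ → Coeffs
  | 0 => 0
  | N + 1 => fun α β =>
      if wt α + wt β = N ∧ α ≠ β ∧ mom α β = 0 ∧ d + 2 ≤ N then
        -expAd (normalizerBelow N) H α β / (Complex.I * smallDivisor ω α β)
      else normalizerBelow N α β

noncomputable def normalizer : Coeffs := fun α β =>
  normalizerBelow ω d H (wt α + wt β + 1) α β

lemma normalizerBelow_apply_eq_zero_of_le {N : ℕ} {α β : Idx} (h : N ≤ wt α + wt β) :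
    normalizerBelow ω d H N α β = 0 := by
  induction N with
  | zero => rfl
  | succ N ih => simp [normalizerBelow, show wt α + wt β ≠ N by omega, ih (by omega)]

lemma normalizerBelow_eqBelow {N M : ℕ} (h : N ≤ M) :
    EqBelow N (normalizerBelow ω d H M) (normalizerBelow ω d H N) := by
  induction M, h using Nat.le_induction with
  | base => exact fun _ _ _ => rfl
  | succ M _ ih =>
    intro α β hαβ
    simp [normalizerBelow, show wt α + wt β ≠ M by omega, ih α β hαβ]

lemma normalizer_eqBelow (N : ℕ) : EqBelow N (normalizer ω d H) (normalizerBelow ω d H N) := by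
  intro α β hαβ
  rcases le_total (wt α + wt β + 1) N with h | h
  · exact (normalizerBelow_eqBelow ω d H h α β (by omega)).symm
  · exact normalizerBelow_eqBelow ω d H h α β hαβ

lemma normalizer_apply {α β : Idx} (hne : α ≠ β) (hmom : mom α β = 0)
    (hdeg : d + 2 ≤ wt α + wt β) :
    normalizer ω d H α β =
      -expAd (normalizerBelow ω d H (wt α + wt β)) H α β /
        (Complex.I * smallDivisor ω α β) :=
  if_pos ⟨rfl, hne, hmom, hdeg⟩

lemma normalizerBelow_vanishesBelow (N : ℕ) : VanishesBelow (d + 2) (normalizerBelow ω d H N) := by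
  induction N with
  | zero => exact fun _ _ _ => rfl
  | succ N ih =>
    intro α β hαβ
    simp only [normalizerBelow]
    rw [if_neg fun h => absurd h.2.2.2 (by omega), ih α β hαβ]

lemma normalizer_vanishesBelow : VanishesBelow (d + 2) (normalizer ω d H) :=
  fun α β => normalizerBelow_vanishesBelow ω d H _ α β

lemma normalizerBelow_conservesMomentum (N : ℕ) :
    ConservesMomentum (normalizerBelow ω d H N) := by
  induction N with
  | zero => exact fun _ _ _ => rfl
  | succ N ih =>
    intro α β hαβ
    simp [normalizerBelow, hαβ, ih α β hαβ]

lemma normalizer_conservesMomentum : ConservesMomentum (normalizer ω d H) :=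
  fun α β => normalizerBelow_conservesMomentum ω d H _ α β

variable {H}

lemma normalizerBelow_isReal (hH : IsReal H) (N : ℕ) : IsReal (normalizerBelow ω d H N) := by
  induction N with
  | zero => exact fun _ _ => by simp [normalizerBelow]
  | succ N ih =>
    intro α β
    have hcond : (wt β + wt α = N ∧ β ≠ α ∧ mom β α = 0 ∧ d + 2 ≤ N) ↔
        (wt α + wt β = N ∧ α ≠ β ∧ mom α β = 0 ∧ d + 2 ≤ N) := by
      rw [add_comm, ne_comm, mom_comm, neg_eq_zero]
    simp only [normalizerBelow, hcond]
    split_ifs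
    · rw [map_div₀, map_neg, ← expAd_isReal ih hH, map_mul, Complex.conj_I, Complex.conj_ofReal,
        smallDivisor_comm]
      push_cast
      ring
    · exact ih α β

lemma normalizer_isReal (hH : IsReal H) : IsReal (normalizer ω d H) := by
  intro α β
  rw [normalizer, normalizer, add_comm (wt β)]
  exact normalizerBelow_isReal ω d hH _ α β

variable {ω d}

theorem expAd_normalizer_apply_of_ne (hω : NonResonant ω) (hd : 1 ≤ d)
    (hHD : EqBelow 3 H (Dom ω)) (hHm : ConservesMomentum H)
    (hHoff : ∀ α β, α ≠ β → wt α + wt β < d + 2 → H α β = 0) {α β : Idx} (hne : α ≠ β) :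
    expAd (normalizer ω d H) H α β = 0 := by
  have hS := normalizer_vanishesBelow ω d H
  by_cases hmom : mom α β = 0
  swap
  · exact expAd_conservesMomentum hHm α β hmom
  rcases Nat.lt_or_ge (wt α + wt β) (d + 2) with hlow | hhigh
  · rw [expAd_eqBelow_self hS (vanishesBelow_two_of_eqBelow_dom hHD) α β (by omega),
      hHoff α β hne hlow]
  obtain ⟨r, hr⟩ := Nat.exists_eq_add_of_le hhigh
  have hdiv : (smallDivisor ω α β : ℂ) ≠ 0 := by exact_mod_cast smallDivisor_ne_zero hω hne
  rw [expAd_apply_eq_add_of_eqBelow hd hS (normalizerBelow_vanishesBelow ω d H _)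
      (normalizer_eqBelow ω d H _) hHD hr hmom (normalizerBelow_apply_eq_zero_of_le ω d H hr.ge),
    normalizer_apply ω d H hne hmom (by omega), hr]
  field_simp
  ring

end Normalizer

/-- formal Birkhoff normal form, existence: for non-resonant
`ω` and `H = D_ω + Z + R` with `Z ∈ 𝓚 ∩ 𝓕^{≥2}` and `R ∈ 𝓕^{≥d}`, `d ≥ 1`,
there is `S ∈ 𝓕^{≥d}` with `e^{{S,·}} H = D_ω + Z̃`, `Z̃ ∈ 𝓚` and
`Z̃ − Z ∈ 𝓚 ∩ 𝓕^{≥d}`. -/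
theorem birkhoff_normal_form_exists (ω : ℤ → ℝ) (hω : NonResonant ω)
    (d : ℕ) (hd : 1 ≤ d) (Z R : Coeffs)
    (hZK : InK Z) (hZ2 : InFge 2 Z) (hR : InFge d R) :
    ∃ S Ztil : Coeffs, InFge d S ∧ InK Ztil ∧
      expAd S (Dom ω + Z + R) = Dom ω + Ztil ∧
      InK (Ztil - Z) ∧ InFge d (Ztil - Z) := by
  set H := Dom ω + Z + R
  have hHD : EqBelow 3 H (Dom ω) := fun α β h => by
    simp [H, hZ2.2 α β (by omega), hR.2 α β (by omega)]
  have hHoff : ∀ α β, α ≠ β → wt α + wt β < d + 2 → H α β = 0 := fun α β hne h => by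
    simp [H, dom_apply_of_ne ω hne, hZK.2 α β hne, hR.2 α β h]
  have hHm : ConservesMomentum H :=
    ((dom_conservesMomentum ω).add hZK.1.conservesMomentum).add hR.1.conservesMomentum
  have hHr : IsReal H := ((dom_isReal ω).add hZK.1.isReal).add hR.1.isReal
  have hS := normalizer_vanishesBelow ω d H
  have hE : EqBelow (d + 2) (expAd (normalizer ω d H) H) H :=
    expAd_eqBelow_self hS (vanishesBelow_two_of_eqBelow_dom hHD)
  have hZtilZ : EqBelow (d + 2) (expAd (normalizer ω d H) H - Dom ω) Z := fun α β h => by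
    rw [Pi.sub_apply, Pi.sub_apply, hE α β h]
    simp [H, hR.2 α β h]
  have hZtilK : InK (expAd (normalizer ω d H) H - Dom ω) :=
    ⟨inF_of_vanishesBelow (fun α β h => (hZtilZ α β (by omega)).trans (hZ2.2 α β (by omega)))
      ((expAd_isReal (normalizer_isReal ω d hHr) hHr).sub (dom_isReal ω))
      ((expAd_conservesMomentum hHm).sub (dom_conservesMomentum ω)),
    fun α β hne => by simp [expAd_normalizer_apply_of_ne hω hd hHD hHm hHoff hne,
      dom_apply_of_ne ω hne]⟩
  refine ⟨normalizer ω d H, _, ⟨inF_of_vanishesBelow (hS.mono (by omega))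
    (normalizer_isReal ω d hHr) (normalizer_conservesMomentum ω d H), hS⟩, hZtilK,
    (add_sub_cancel _ _).symm, hZtilK.sub hZK, (hZtilK.sub hZK).1,
    fun α β h => sub_eq_zero.2 (hZtilZ α β h)⟩
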